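/- arXiv:2502.09962 — 7 statements merged into one kernel-verified Lean document; each statement's English description precedes it below -/
import Mathlib

section
/- Suppose a bipartite graph between institutions D̄ and agents has no safe block and every institution in D̄ has at least one neighbor. Let d ∈ D̄ and let a be any agent adjacent to d. Then there exists a maximum matching of the graph restricted to D̄ that includes the edge {d, a}. -/
open scoped Classical

variable {N D : Type*} [Fintype N] [Fintype D] [DecidableEq N] [DecidableEq D]

/-- Neighborhood of a set of institutions: agents adjacent to some institution in `T`. -/
noncomputable def nbr (adj : D → N → Prop) (T : Finset D) : Finset N :=
  Finset.univ.filter fun a => ∃ d ∈ T, adj d a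

/-- `T` is equal-acceptable: exactly as many neighbors as institutions. -/
def equalAcc (adj : D → N → Prop) (T : Finset D) : Prop :=
  (nbr adj T).card = T.card

/-- A safe block: a nonempty equal-acceptable set with no nonempty proper
equal-acceptable subset. -/
def safeBlock (adj : D → N → Prop) (S : Finset D) : Prop :=
  S.Nonempty ∧ equalAcc adj S ∧ ∀ S' ⊂ S, S'.Nonempty → ¬ equalAcc adj S'

/-- `M` is a matching of the bipartite graph restricted to institutions `Dbar`. -/
def isMatching (adj : D → N → Prop) (Dbar : Finset D) (M : Finset (D × N)) : Prop :=
  (∀ p ∈ M, p.1 ∈ Dbar ∧ adj p.1 p.2) ∧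
  (∀ p ∈ M, ∀ q ∈ M, p.1 = q.1 → p = q) ∧
  (∀ p ∈ M, ∀ q ∈ M, p.2 = q.2 → p = q)

lemma nbr_mono (adj : D → N → Prop) {S T : Finset D} (h : S ⊆ T) :
    nbr adj S ⊆ nbr adj T := by
  intro b hb
  simp only [nbr, Finset.mem_filter, Finset.mem_univ, true_and] at hb ⊢
  obtain ⟨x, hx, hadj⟩ := hb
  exact ⟨x, h hx, hadj⟩

lemma strict_hall (adj : D → N → Prop) (Dbar : Finset D)
    (hns : ∀ S ⊆ Dbar, ¬ safeBlock adj S)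
    (hnb : ∀ d ∈ Dbar, ∃ a, adj d a) :
    ∀ S ⊆ Dbar, S.Nonempty → S.card < (nbr adj S).card := by
  intro S
  induction S using Finset.strongInduction with
  | _ S ih =>
    intro hS hSne
    by_contra h
    push_neg at h
    rcases lt_or_eq_of_le h with hlt | heq
    · obtain ⟨x, hx⟩ := hSne
      by_cases h1 : S.card ≤ 1
      · obtain ⟨a', ha'⟩ := hnb x (hS hx)
        have hmem : a' ∈ nbr adj S := by
          simp only [nbr, Finset.mem_filter, Finset.mem_univ, true_and]
          exact ⟨x, hx, ha'⟩
        have := Finset.card_pos.mpr ⟨a', hmem⟩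
        omega
      · set S' := S.erase x with hS'
        have hss : S' ⊂ S := Finset.erase_ssubset hx
        have hcard : S'.card = S.card - 1 := Finset.card_erase_of_mem hx
        have hne : S'.Nonempty := by rw [← Finset.card_pos]; omega
        have hlt2 := ih S' hss (hss.subset.trans hS) hne
        have hle := Finset.card_le_card (nbr_mono adj hss.subset)
        omega
    · refine hns S hS ⟨hSne, heq, fun S' hss hne hea => ?_⟩
      have := ih S' hss (hss.subset.trans hS) hne
      unfold equalAcc at hea
      omega

/-- If a graph on institutions  has no safe block and every institution of 
has a neighbor, then for every  and agent  adjacent to  there is a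
maximum matching of the graph restricted to  containing the edge . -/

theorem no_safe_block_max_matching_through_edge (adj : D → N → Prop) (Dbar : Finset D)
    (hns : ∀ S ⊆ Dbar, ¬ safeBlock adj S)
    (hnb : ∀ d ∈ Dbar, ∃ a, adj d a)
    (d : D) (hd : d ∈ Dbar) (a : N) (ha : adj d a) :
    ∃ M : Finset (D × N), isMatching adj Dbar M ∧ (d, a) ∈ M ∧
      ∀ M' : Finset (D × N), isMatching adj Dbar M' → M'.card ≤ M.card := by
  have hhall := strict_hall adj Dbar hns hnb
  -- Hall's theorem on Dbar.erase d, forbidding agent a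
  set t : {x // x ∈ Dbar.erase d} → Finset N :=
    fun x => (nbr adj {x.1}).erase a with ht
  have hcond : ∀ s : Finset {x // x ∈ Dbar.erase d}, s.card ≤ (s.biUnion t).card := by
    intro s
    rcases s.eq_empty_or_nonempty with rfl | hne
    · simp
    set S : Finset D := s.image (·.1) with hSdef
    have hScard : S.card = s.card := Finset.card_image_of_injective _ Subtype.val_injective
    have hSsub : S ⊆ Dbar := by
      intro x hx
      simp only [hSdef, Finset.mem_image] at hx
      obtain ⟨y, _, rfl⟩ := hx
      exact Finset.mem_of_mem_erase y.2
    have hSne : S.Nonempty := hne.image _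
    have hstrict := hhall S hSsub hSne
    have hsub : (nbr adj S).erase a ⊆ s.biUnion t := by
      intro b hb
      obtain ⟨hba, hb⟩ := Finset.mem_erase.mp hb
      simp only [nbr, Finset.mem_filter, Finset.mem_univ, true_and] at hb
      obtain ⟨d', hd', hadj⟩ := hb
      simp only [hSdef, Finset.mem_image] at hd'
      obtain ⟨y, hy, rfl⟩ := hd'
      refine Finset.mem_biUnion.mpr ⟨y, hy, ?_⟩
      simp only [ht, Finset.mem_erase, nbr, Finset.mem_filter, Finset.mem_univ, true_and]
      exact ⟨hba, y.1, Finset.mem_singleton_self _, hadj⟩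
    have h1 : (nbr adj S).card - 1 ≤ ((nbr adj S).erase a).card := by
      by_cases h : a ∈ nbr adj S
      · rw [Finset.card_erase_of_mem h]
      · rw [Finset.erase_eq_of_notMem h]; omega
    have h2 := Finset.card_le_card hsub
    omega
  obtain ⟨f, hfinj, hft⟩ :=
    (Finset.all_card_le_biUnion_card_iff_exists_injective t).mp hcond
  have hfa : ∀ x, f x ≠ a := fun x => (Finset.mem_erase.mp (hft x)).1
  have hfadj : ∀ x, adj x.1 (f x) := by
    intro x
    have := (Finset.mem_erase.mp (hft x)).2
    simp only [nbr, Finset.mem_filter, Finset.mem_univ, true_and] at this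
    obtain ⟨d', hd', hadj⟩ := this
    rwa [Finset.mem_singleton.mp hd'] at hadj
  set M : Finset (D × N) :=
    insert (d, a) ((Dbar.erase d).attach.image fun x => (x.1, f x)) with hM
  have hmemM : ∀ p ∈ M, p = (d, a) ∨ ∃ x, p = (x.1, f x) := by
    intro p hp
    rcases Finset.mem_insert.mp hp with h | h
    · exact Or.inl h
    · right
      obtain ⟨x, _, rfl⟩ := Finset.mem_image.mp h
      exact ⟨x, rfl⟩
  have hmatch : isMatching adj Dbar M := by
    refine ⟨?_, ?_, ?_⟩
    · intro p hp
      rcases hmemM p hp with rfl | ⟨x, rfl⟩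
      · exact ⟨hd, ha⟩
      · exact ⟨Finset.mem_of_mem_erase x.2, hfadj x⟩
    · intro p hp q hq hpq
      rcases hmemM p hp with rfl | ⟨x, rfl⟩ <;> rcases hmemM q hq with rfl | ⟨y, rfl⟩
      · rfl
      · exact absurd hpq (fun h => (Finset.mem_erase.mp y.2).1 h.symm)
      · exact absurd hpq (fun h => (Finset.mem_erase.mp x.2).1 h)
      · simp only [Prod.mk.injEq]
        have : x = y := Subtype.ext hpq
        exact ⟨hpq, by rw [this]⟩
    · intro p hp q hq hpq
      rcases hmemM p hp with rfl | ⟨x, rfl⟩ <;> rcases hmemM q hq with rfl | ⟨y, rfl⟩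
      · rfl
      · exact absurd hpq.symm (hfa y)
      · exact absurd hpq (hfa x)
      · have : x = y := hfinj hpq
        rw [this]
  have hdaM : (d, a) ∈ M := Finset.mem_insert_self _ _
  refine ⟨M, hmatch, hdaM, ?_⟩
  -- cardinality: M.card = Dbar.card and any matching has at most Dbar.card edges
  have himginj : Function.Injective (fun x : {x // x ∈ Dbar.erase d} => (x.1, f x)) := by
    intro x y hxy
    exact Subtype.ext (congrArg Prod.fst hxy)
  have hMcard : M.card = Dbar.card := by
    rw [hM, Finset.card_insert_of_notMem, Finset.card_image_of_injective _ himginj,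
      Finset.card_attach, Finset.card_erase_of_mem hd]
    · have : 0 < Dbar.card := Finset.card_pos.mpr ⟨d, hd⟩
      omega
    · intro h
      obtain ⟨x, _, hx⟩ := Finset.mem_image.mp h
      exact (Finset.mem_erase.mp x.2).1 (congrArg Prod.fst hx)
  intro M' hM'
  have : M'.card ≤ Dbar.card := by
    have hcard := Finset.card_le_card_of_injOn (fun p => p.1)
      (fun p hp => (hM'.1 p hp).1)
      (fun p hp q hq hpq => hM'.2.1 p hp q hq hpq)
    exact hcard
  omega
end

section
/- In the two-sided matching model with dichotomous agent preferences and strict institution priorities, a maximum-size individually rational matching that is fair always exists. Formally: given acceptability sets A_i ⊆ D for each agent i and a strict total order ≻_d on agents for each institution d, there exists a matching μ in the acceptability graph of maximum cardinality such that there is no triple (i, j, d) with i unmatched, d ∈ A_i, μ(d) = j, and i ≻_d j, and no pair (i, d) with i unmatched, d ∈ A_i, and d unmatched. -/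
open scoped Classical

variable {I D : Type*} [Fintype I] [Fintype D] [DecidableEq I] [DecidableEq D]

/-- `M` is a matching: each agent and each institution appears at most once. -/
def isMatchingAD (M : Finset (I × D)) : Prop :=
  (∀ p ∈ M, ∀ q ∈ M, p.1 = q.1 → p = q) ∧ (∀ p ∈ M, ∀ q ∈ M, p.2 = q.2 → p = q)

/-- Individual rationality: matched institutions are acceptable to their agents. -/
def IRat (A : I → Finset D) (M : Finset (I × D)) : Prop := ∀ p ∈ M, p.2 ∈ A p.1

/-- Agent `i` is unmatched in `M`. -/
def unmatchedAgent (M : Finset (I × D)) (i : I) : Prop := ∀ d, (i, d) ∉ M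

/-- Fairness: no unmatched agent `i` with an acceptable institution `d` that is either
unmatched or matched to a lower-priority agent (lower `rank` means higher priority). -/
def fairM (A : I → Finset D) (rank : D → I → ℕ) (M : Finset (I × D)) : Prop :=
  ¬ ∃ i d, unmatchedAgent M i ∧ d ∈ A i ∧
    ((∀ j, (j, d) ∉ M) ∨ ∃ j, (j, d) ∈ M ∧ rank d i < rank d j)


/-- A maximum-size individually rational fair matching always exists. -/
theorem exists_max_fair_matching (A : I → Finset D) (rank : D → I → ℕ)
    (hrank : ∀ d, Function.Injective (rank d)) :
    ∃ M : Finset (I × D), isMatchingAD M ∧ IRat A M ∧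
      (∀ M' : Finset (I × D), isMatchingAD M' → IRat A M' → M'.card ≤ M.card) ∧
      fairM A rank M := by
  classical
  -- total rank of a matching
  set Φ : Finset (I × D) → ℕ := fun M => ∑ p ∈ M, rank p.2 p.1 with hΦ
  set B : ℕ := ∑ p ∈ (Finset.univ : Finset (I × D)), rank p.2 p.1 with hB
  have hΦle : ∀ M : Finset (I × D), Φ M ≤ B := by
    intro M
    exact Finset.sum_le_sum_of_subset (Finset.subset_univ M)
  set K : Finset (I × D) → ℕ := fun M => M.card * (B + 1) + (B - Φ M) with hK
  set s : Finset (Finset (I × D)) :=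
    Finset.univ.filter (fun M => isMatchingAD M ∧ IRat A M) with hs
  have hmem : ∀ M : Finset (I × D), M ∈ s ↔ isMatchingAD M ∧ IRat A M := by
    intro M; simp [hs]
  have hne : s.Nonempty := by
    refine ⟨∅, (hmem ∅).2 ⟨⟨?_, ?_⟩, ?_⟩⟩ <;> simp [IRat]
  obtain ⟨M, hMs, hmax⟩ := s.exists_max_image K hne
  obtain ⟨hMmatch, hMIR⟩ := (hmem M).1 hMs
  -- cardinality domination
  have hcardlt : ∀ M' ∈ s, M.card < M'.card → False := by
    intro M' hM's hlt
    have h1 : K M' ≤ K M := hmax M' hM's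
    have h2 : (M.card + 1) * (B + 1) ≤ M'.card * (B + 1) :=
      Nat.mul_le_mul_right _ hlt
    have h3 : B - Φ M ≤ B := Nat.sub_le _ _
    have h4 : M'.card * (B + 1) ≤ K M' := Nat.le_add_right _ _
    simp only [hK] at h1
    nlinarith
  refine ⟨M, hMmatch, hMIR, ?_, ?_⟩
  · intro M' hm hir
    by_contra h
    exact hcardlt M' ((hmem M').2 ⟨hm, hir⟩) (by omega)
  · rintro ⟨i, d, hun, hA, hcase⟩
    rcases hcase with hd | ⟨j, hjM, hlt⟩
    · -- d unmatched: insert (i,d) gives a larger matching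
      set N := insert (i, d) M with hN
      have hid : (i, d) ∉ M := hun d
      have hNs : N ∈ s := by
        refine (hmem N).2 ⟨⟨?_, ?_⟩, ?_⟩
        · intro p hp q hq h
          rcases Finset.mem_insert.1 hp with hp | hp <;>
            rcases Finset.mem_insert.1 hq with hq | hq
          · rw [hp, hq]
          · exact absurd (hp ▸ h ▸ (show (q.1, q.2) ∈ M by simpa using hq))
              (by rw [hp] at h; exact h ▸ (by simpa [← h] using hun q.2))
          · rw [hq] at h; exact absurd (show (i, p.2) ∈ M by
              have : p = (p.1, p.2) := rfl
              rw [this, h] at hp; exact hp) (hun p.2)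
          · exact hMmatch.1 p hp q hq h
        · intro p hp q hq h
          rcases Finset.mem_insert.1 hp with hp | hp <;>
            rcases Finset.mem_insert.1 hq with hq | hq
          · rw [hp, hq]
          · simp only [hp] at h
            exact (hd q.1 (by rw [show (q.1, d) = q from Prod.ext rfl h]; exact hq)).elim
          · simp only [hq] at h
            exact (hd p.1 (by rw [show (p.1, d) = p from Prod.ext rfl h.symm]; exact hp)).elim
          · exact hMmatch.2 p hp q hq h
        · intro p hp
          rcases Finset.mem_insert.1 hp with hp | hp
          · rw [hp]; exact hA
          · exact hMIR p hp
      have hcard : N.card = M.card + 1 := Finset.card_insert_of_notMem hid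
      exact hcardlt N hNs (by omega)
    · -- swap j for i at d
      have hij : i ≠ j := fun h => hun d (h ▸ hjM)
      set E := M.erase (j, d) with hE
      set N := insert (i, d) E with hN
      have hidE : (i, d) ∉ E := fun h => hun d (Finset.mem_of_mem_erase h)
      have hEsub : E ⊆ M := Finset.erase_subset _ _
      -- key fact: anything in E with second coord d is impossible
      have hEd : ∀ q ∈ E, q.2 = d → False := by
        intro q hq h2
        have hqM : q ∈ M := hEsub hq
        have : q = (j, d) := hMmatch.2 q hqM (j, d) hjM h2
        exact (Finset.ne_of_mem_erase hq) this
      have hNs : N ∈ s := by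
        refine (hmem N).2 ⟨⟨?_, ?_⟩, ?_⟩
        · intro p hp q hq h
          rcases Finset.mem_insert.1 hp with hp | hp <;>
            rcases Finset.mem_insert.1 hq with hq | hq
          · rw [hp, hq]
          · exfalso; rw [hp] at h
            have : q = (i, q.2) := by
              have : q = (q.1, q.2) := rfl
              rw [this, ← h]
            rw [this] at hq
            exact hun q.2 (hEsub hq)
          · exfalso; rw [hq] at h
            have : p = (i, p.2) := by
              have : p = (p.1, p.2) := rfl
              rw [this, h]
            rw [this] at hp
            exact hun p.2 (hEsub hp)
          · exact hMmatch.1 p (hEsub hp) q (hEsub hq) h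
        · intro p hp q hq h
          rcases Finset.mem_insert.1 hp with hp | hp <;>
            rcases Finset.mem_insert.1 hq with hq | hq
          · rw [hp, hq]
          · exact (hEd q hq (by rw [hp] at h; exact h.symm)).elim
          · exact (hEd p hp (by rw [hq] at h; exact h)).elim
          · exact hMmatch.2 p (hEsub hp) q (hEsub hq) h
        · intro p hp
          rcases Finset.mem_insert.1 hp with hp | hp
          · rw [hp]; exact hA
          · exact hMIR p (hEsub hp)
      have hcardN : N.card = M.card := by
        rw [hN, Finset.card_insert_of_notMem hidE, hE,
          Finset.card_erase_add_one hjM]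
      have hΦN : Φ N = rank d i + Φ E := by
        simp [hN, hΦ, Finset.sum_insert hidE]
      have hΦM : Φ M = rank d j + Φ E := by
        rw [hΦ, hE]
        exact (Finset.add_sum_erase M (fun p => rank p.2 p.1) hjM).symm
      have hΦlt : Φ N < Φ M := by rw [hΦN, hΦM]; omega
      have hle : Φ M ≤ B := hΦle M
      have hKlt : K M < K N := by
        simp only [hK, hcardN]
        omega
      exact absurd (hmax N hNs) (by omega)
end

section
/- Under dichotomous agent preferences, an individually rational matching is Pareto-efficient for the agents if and only if it is a maximum-size matching of the acceptability graph. -/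
open scoped Classical

variable {I D : Type*} [Fintype I] [Fintype D] [DecidableEq I] [DecidableEq D]

/-- Dichotomous utility: 1 if matched acceptably, 0 if unmatched, -1 otherwise. -/
noncomputable def util (A : I → Finset D) (M : Finset (I × D)) (i : I) : ℤ :=
  if ∃ d ∈ A i, (i, d) ∈ M then 1 else if ∀ d, (i, d) ∉ M then 0 else -1

/-- `M` is Pareto-efficient for agents. -/
def paretoEffAgents (A : I → Finset D) (M : Finset (I × D)) : Prop :=
  ¬ ∃ M' : Finset (I × D), isMatchingAD M' ∧
    (∀ i, util A M i ≤ util A M' i) ∧ ∃ i, util A M i < util A M' i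

lemma matching_subset {M N : Finset (I × D)} (h : N ⊆ M) (hM : isMatchingAD M) :
    isMatchingAD N :=
  ⟨fun p hp q hq he => hM.1 p (h hp) q (h hq) he,
   fun p hp q hq he => hM.2 p (h hp) q (h hq) he⟩

lemma card_image_fst {M : Finset (I × D)} (hM : isMatchingAD M) :
    (M.image Prod.fst).card = M.card :=
  Finset.card_image_of_injOn fun p hp q hq h => hM.1 p hp q hq h

lemma exists_mem_not_mem {s t : Finset I} (h : s.card < t.card) : ∃ x ∈ t, x ∉ s := by
  by_contra hc
  push_neg at hc
  exact absurd (Finset.card_le_card hc) (not_le.mpr h)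

lemma mem_image_fst {M : Finset (I × D)} {i : I} :
    i ∈ M.image Prod.fst ↔ ∃ d, (i, d) ∈ M := by
  constructor
  · rintro h
    obtain ⟨⟨a, b⟩, hab, h⟩ := Finset.mem_image.mp h
    exact ⟨b, by rwa [show i = a from h.symm]⟩
  · rintro ⟨d, h⟩
    exact Finset.mem_image.mpr ⟨(i, d), h, rfl⟩

lemma mem_image_snd {M : Finset (I × D)} {d : D} :
    d ∈ M.image Prod.snd ↔ ∃ i, (i, d) ∈ M := by
  constructor
  · rintro h
    obtain ⟨⟨a, b⟩, hab, h⟩ := Finset.mem_image.mp h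
    exact ⟨a, by rwa [show d = b from h.symm]⟩
  · rintro ⟨i, h⟩
    exact Finset.mem_image.mpr ⟨(i, d), h, rfl⟩

/-- Augmenting lemma: if `M'` is a larger matching than `M`, there is a matching
inside `M ∪ M'` that is strictly larger than `M` and covers everything `M` covers. -/
lemma aug : ∀ (n : ℕ) (M M' : Finset (I × D)), M.card ≤ n →
    isMatchingAD M → isMatchingAD M' → M.card < M'.card →
    ∃ N : Finset (I × D), isMatchingAD N ∧ N ⊆ M ∪ M' ∧ M.card < N.card ∧
      M.image Prod.fst ⊆ N.image Prod.fst ∧ M.image Prod.snd ⊆ N.image Prod.snd := by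
  intro n
  induction n with
  | zero =>
    intro M M' hn hM hM' hcard
    have hMe : M = ∅ := Finset.card_eq_zero.mp (Nat.le_zero.mp hn)
    subst hMe
    obtain ⟨e, he⟩ := Finset.card_pos.mp (by simpa using hcard)
    refine ⟨{e}, matching_subset (by simp [he]) hM', by simp [he], by simp, by simp, by simp⟩
  | succ n ih =>
    intro M M' hn hM hM' hcard
    -- find an agent covered by M' but not by M
    have hci : (M.image Prod.fst).card < (M'.image Prod.fst).card := by
      rw [card_image_fst hM, card_image_fst hM']; exact hcard
    obtain ⟨i, hiM', hiM⟩ := exists_mem_not_mem hci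
    obtain ⟨d, hpM'⟩ := mem_image_fst.mp hiM'
    have hiMe : ∀ d', (i, d') ∉ M := fun d' hd' =>
      hiM (mem_image_fst.mpr ⟨d', hd'⟩)
    by_cases hd : d ∈ M.image Prod.snd
    · -- d is matched in M to some agent j
      obtain ⟨j, hqM⟩ := mem_image_snd.mp hd
      set M₀ := M.erase (j, d) with hM₀
      set M₀' := M'.erase (i, d) with hM₀'
      have hjM : (j, d) ∈ M := hqM
      have hMc : M.card = M₀.card + 1 := by
        rw [hM₀, Finset.card_erase_of_mem hjM]
        have : 0 < M.card := Finset.card_pos.mpr ⟨_, hjM⟩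
        omega
      have hM'c : M'.card = M₀'.card + 1 := by
        rw [hM₀', Finset.card_erase_of_mem hpM']
        have : 0 < M'.card := Finset.card_pos.mpr ⟨_, hpM'⟩
        omega
      have hle : M₀.card ≤ n := by
        have := hn; omega
      have hlt : M₀.card < M₀'.card := by omega
      obtain ⟨N₀, hN₀m, hN₀sub, hN₀c, hN₀f, hN₀s⟩ :=
        ih M₀ M₀' hle (matching_subset (Finset.erase_subset _ _) hM)
          (matching_subset (Finset.erase_subset _ _) hM') hlt
      -- d is not covered by N₀
      have hdN₀ : ∀ k, (k, d) ∉ N₀ := by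
        intro k hk
        rcases Finset.mem_union.mp (hN₀sub hk) with h | h
        · have := hM.2 (k, d) (Finset.erase_subset _ _ h) (j, d) hjM rfl
          rw [this] at h
          exact (Finset.notMem_erase _ _) h
        · have := hM'.2 (k, d) (Finset.erase_subset _ _ h) (i, d) hpM' rfl
          rw [this] at h
          exact (Finset.notMem_erase _ _) h
      -- i is not covered by N₀
      have hiN₀ : ∀ d', (i, d') ∉ N₀ := by
        intro d' hd'
        rcases Finset.mem_union.mp (hN₀sub hd') with h | h
        · exact hiMe d' (Finset.erase_subset _ _ h)
        · have := hM'.1 (i, d') (Finset.erase_subset _ _ h) (i, d) hpM' rfl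
          rw [this] at h
          exact (Finset.notMem_erase _ _) h
      have hMins : M = insert (j, d) M₀ := by
        rw [hM₀, Finset.insert_erase hjM]
      by_cases hj : j ∈ N₀.image Prod.fst
      · -- j already covered: add (i, d)
        have hnotmem : (i, d) ∉ N₀ := hiN₀ d
        refine ⟨insert (i, d) N₀, ?_, ?_, ?_, ?_, ?_⟩
        · constructor
          · intro p hp q hq he
            rcases Finset.mem_insert.mp hp with rfl | hp <;>
              rcases Finset.mem_insert.mp hq with rfl | hq
            · rfl
            · exact absurd hq (by cases q; cases he; exact hiN₀ _)
            · exact absurd hp (by cases p; cases he; exact hiN₀ _)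
            · exact hN₀m.1 p hp q hq he
          · intro p hp q hq he
            rcases Finset.mem_insert.mp hp with rfl | hp <;>
              rcases Finset.mem_insert.mp hq with rfl | hq
            · rfl
            · exact absurd hq (by cases q; cases he; exact hdN₀ _)
            · exact absurd hp (by cases p; cases he; exact hdN₀ _)
            · exact hN₀m.2 p hp q hq he
        · intro p hp
          rcases Finset.mem_insert.mp hp with rfl | hp
          · exact Finset.mem_union.mpr (Or.inr hpM')
          · rcases Finset.mem_union.mp (hN₀sub hp) with h | h
            · exact Finset.mem_union.mpr (Or.inl (Finset.erase_subset _ _ h))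
            · exact Finset.mem_union.mpr (Or.inr (Finset.erase_subset _ _ h))
        · rw [Finset.card_insert_of_notMem hnotmem]; omega
        · intro x hx
          rw [hMins] at hx
          rw [Finset.image_insert] at hx
          rcases Finset.mem_insert.mp hx with rfl | hx
          · exact Finset.image_subset_image (Finset.subset_insert _ _) hj
          · exact Finset.image_subset_image (Finset.subset_insert _ _) (hN₀f hx)
        · intro x hx
          rw [hMins, Finset.image_insert] at hx
          rcases Finset.mem_insert.mp hx with rfl | hx
          · exact mem_image_snd.mpr ⟨i, Finset.mem_insert_self _ _⟩
          · exact Finset.image_subset_image (Finset.subset_insert _ _) (hN₀s hx)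
      · -- j not covered: add (j, d)
        have hjN₀ : ∀ d', (j, d') ∉ N₀ := fun d' hd' =>
          hj (mem_image_fst.mpr ⟨d', hd'⟩)
        have hnotmem : (j, d) ∉ N₀ := hjN₀ d
        refine ⟨insert (j, d) N₀, ?_, ?_, ?_, ?_, ?_⟩
        · constructor
          · intro p hp q hq he
            rcases Finset.mem_insert.mp hp with rfl | hp <;>
              rcases Finset.mem_insert.mp hq with rfl | hq
            · rfl
            · exact absurd hq (by cases q; cases he; exact hjN₀ _)
            · exact absurd hp (by cases p; cases he; exact hjN₀ _)
            · exact hN₀m.1 p hp q hq he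
          · intro p hp q hq he
            rcases Finset.mem_insert.mp hp with rfl | hp <;>
              rcases Finset.mem_insert.mp hq with rfl | hq
            · rfl
            · exact absurd hq (by cases q; cases he; exact hdN₀ _)
            · exact absurd hp (by cases p; cases he; exact hdN₀ _)
            · exact hN₀m.2 p hp q hq he
        · intro p hp
          rcases Finset.mem_insert.mp hp with rfl | hp
          · exact Finset.mem_union.mpr (Or.inl hjM)
          · rcases Finset.mem_union.mp (hN₀sub hp) with h | h
            · exact Finset.mem_union.mpr (Or.inl (Finset.erase_subset _ _ h))
            · exact Finset.mem_union.mpr (Or.inr (Finset.erase_subset _ _ h))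
        · rw [Finset.card_insert_of_notMem hnotmem]; omega
        · intro x hx
          rw [hMins, Finset.image_insert] at hx
          rcases Finset.mem_insert.mp hx with rfl | hx
          · exact mem_image_fst.mpr ⟨d, Finset.mem_insert_self _ _⟩
          · exact Finset.image_subset_image (Finset.subset_insert _ _) (hN₀f hx)
        · intro x hx
          rw [hMins, Finset.image_insert] at hx
          rcases Finset.mem_insert.mp hx with rfl | hx
          · exact mem_image_snd.mpr ⟨j, Finset.mem_insert_self _ _⟩
          · exact Finset.image_subset_image (Finset.subset_insert _ _) (hN₀s hx)
    · -- d unmatched in M: just add (i, d) to M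
      have hdMe : ∀ k, (k, d) ∉ M := fun k hk =>
        hd (mem_image_snd.mpr ⟨k, hk⟩)
      have hnotmem : (i, d) ∉ M := hiMe d
      refine ⟨insert (i, d) M, ?_, ?_, ?_, ?_, ?_⟩
      · constructor
        · intro p hp q hq he
          rcases Finset.mem_insert.mp hp with rfl | hp <;>
            rcases Finset.mem_insert.mp hq with rfl | hq
          · rfl
          · exact absurd hq (by cases q; cases he; exact hiMe _)
          · exact absurd hp (by cases p; cases he; exact hiMe _)
          · exact hM.1 p hp q hq he
        · intro p hp q hq he
          rcases Finset.mem_insert.mp hp with rfl | hp <;>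
            rcases Finset.mem_insert.mp hq with rfl | hq
          · rfl
          · exact absurd hq (by cases q; cases he; exact hdMe _)
          · exact absurd hp (by cases p; cases he; exact hdMe _)
          · exact hM.2 p hp q hq he
      · intro p hp
        rcases Finset.mem_insert.mp hp with rfl | hp
        · exact Finset.mem_union.mpr (Or.inr hpM')
        · exact Finset.mem_union.mpr (Or.inl hp)
      · rw [Finset.card_insert_of_notMem hnotmem]; omega
      · exact Finset.image_subset_image (Finset.subset_insert _ _)
      · exact Finset.image_subset_image (Finset.subset_insert _ _)

lemma util_eq_one_iff {A : I → Finset D} {M : Finset (I × D)} (hIR : IRat A M) (i : I) :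
    util A M i = 1 ↔ i ∈ M.image Prod.fst := by
  constructor
  · intro h
    by_contra hc
    have hne : ¬ ∃ d ∈ A i, (i, d) ∈ M := by
      rintro ⟨d, _, hd⟩
      exact hc (mem_image_fst.mpr ⟨d, hd⟩)
    simp only [util, if_neg hne] at h
    split_ifs at h <;> omega
  · intro h
    obtain ⟨d, hp⟩ := mem_image_fst.mp h
    have : ∃ d ∈ A i, (i, d) ∈ M := ⟨d, hIR _ hp, hp⟩
    simp only [util, if_pos this]

lemma util_nonneg {A : I → Finset D} {M : Finset (I × D)} (hIR : IRat A M) (i : I) :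
    0 ≤ util A M i := by
  simp only [util]
  split_ifs with h1 h2
  · norm_num
  · norm_num
  · push_neg at h2
    obtain ⟨d, hd⟩ := h2
    exact absurd ⟨d, hIR _ hd, hd⟩ h1

lemma util_le_one (A : I → Finset D) (M : Finset (I × D)) (i : I) :
    util A M i ≤ 1 := by
  simp only [util]; split_ifs <;> norm_num

/-- Under dichotomous preferences, an individually rational matching is Pareto-efficient
for agents iff it is a maximum-size matching of the acceptability graph. -/
theorem paretoEff_iff_maximum (A : I → Finset D) (M : Finset (I × D))
    (hM : isMatchingAD M) (hIR : IRat A M) :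
    paretoEffAgents A M ↔
      ∀ M' : Finset (I × D), isMatchingAD M' → IRat A M' → M'.card ≤ M.card := by
  constructor
  · intro hP M' hM' hIR'
    by_contra hc
    push_neg at hc
    obtain ⟨N, hNm, hNsub, hNc, hNf, _⟩ := aug M.card M M' le_rfl hM hM' hc
    have hNIR : IRat A N := by
      intro p hp
      rcases Finset.mem_union.mp (hNsub hp) with h | h
      · exact hIR p h
      · exact hIR' p h
    apply hP
    refine ⟨N, hNm, ?_, ?_⟩
    · intro i
      by_cases h : i ∈ M.image Prod.fst
      · rw [(util_eq_one_iff hNIR i).mpr (hNf h)]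
        exact util_le_one A M i
      · have h0 : util A M i = 0 := by
          have hle := util_le_one A M i
          have hge := util_nonneg hIR i
          have : util A M i ≠ 1 := fun he => h ((util_eq_one_iff hIR i).mp he)
          omega
        rw [h0]
        exact util_nonneg hNIR i
    · have hlt : (M.image Prod.fst).card < (N.image Prod.fst).card := by
        rw [card_image_fst hM, card_image_fst hNm]; exact hNc
      obtain ⟨i, hiN, hiM⟩ := exists_mem_not_mem hlt
      refine ⟨i, ?_⟩
      rw [(util_eq_one_iff hNIR i).mpr hiN]
      have hle := util_le_one A M i
      have : util A M i ≠ 1 := fun he => hiM ((util_eq_one_iff hIR i).mp he)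
      omega
  · rintro hmax ⟨M', hM', hle, i₀, hlt⟩
    set M'' := M'.filter (fun p => p.2 ∈ A p.1) with hM''
    have hM''m : isMatchingAD M'' := matching_subset (Finset.filter_subset _ _) hM'
    have hM''IR : IRat A M'' := fun p hp => (Finset.mem_filter.mp hp).2
    have key : ∀ i, 1 ≤ util A M' i → i ∈ M''.image Prod.fst := by
      intro i hi
      have hcond : ∃ d ∈ A i, (i, d) ∈ M' := by
        by_contra hc
        simp only [util, if_neg hc] at hi
        split_ifs at hi <;> omega
      obtain ⟨d, hdA, hdM⟩ := hcond
      exact mem_image_fst.mpr ⟨d, Finset.mem_filter.mpr ⟨hdM, hdA⟩⟩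
    have hsub : insert i₀ (M.image Prod.fst) ⊆ M''.image Prod.fst := by
      intro x hx
      rcases Finset.mem_insert.mp hx with rfl | hx
      · have h1 : util A M' x = 1 := by
          have := util_le_one A M' x
          have := util_nonneg hIR x
          omega
        exact key x (by omega)
      · have := (util_eq_one_iff hIR x).mpr hx
        exact key x (by have := hle x; omega)
    have hi₀ : i₀ ∉ M.image Prod.fst := by
      intro hc
      have := (util_eq_one_iff hIR i₀).mpr hc
      have := util_le_one A M' i₀
      omega
    have hcard : M.card + 1 ≤ M''.card := by
      have h1 : (insert i₀ (M.image Prod.fst)).card = M.card + 1 := by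
        rw [Finset.card_insert_of_notMem hi₀, card_image_fst hM]
      calc M.card + 1 = (insert i₀ (M.image Prod.fst)).card := h1.symm
        _ ≤ (M''.image Prod.fst).card := Finset.card_le_card hsub
        _ ≤ M''.card := Finset.card_image_le
    have := hmax M'' hM''m hM''IR
    omega
end

section
/- If μ is a maximum-size individually rational matching that is not fair, then there exist an unmatched agent i and an institution d with d ∈ A_i, d matched in μ to some agent j with i ≻_d j, and replacing j by i at d yields another maximum-size individually rational matching in which institution d is strictly better off and no institution is worse off. -/
open scoped Classical

variable {I D : Type*} [Fintype I] [Fintype D] [DecidableEq I] [DecidableEq D]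

/-- Institution `d` is not worse off in `M'` than in `M`. -/
def notWorseAt (rank : D → I → ℕ) (M M' : Finset (I × D)) (d : D) : Prop :=
  ∀ j, (j, d) ∈ M → ∃ j', (j', d) ∈ M' ∧ rank d j' ≤ rank d j

/-- A maximum individually rational matching that is not fair can be improved by
replacing, at some institution, its matched agent by a higher-priority unmatched agent,
keeping maximality, making that institution strictly better off and no institution worse off. -/
theorem improve_unfair_max_matching (A : I → Finset D) (rank : D → I → ℕ)
    (hrank : ∀ d, Function.Injective (rank d))
    (M : Finset (I × D)) (hM : isMatchingAD M) (hIR : IRat A M)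
    (hmax : ∀ M' : Finset (I × D), isMatchingAD M' → IRat A M' → M'.card ≤ M.card)
    (hunfair : ¬ fairM A rank M) :
    ∃ i d j, unmatchedAgent M i ∧ d ∈ A i ∧ (j, d) ∈ M ∧ rank d i < rank d j ∧
      isMatchingAD (insert (i, d) (M.erase (j, d))) ∧
      IRat A (insert (i, d) (M.erase (j, d))) ∧
      (∀ M' : Finset (I × D), isMatchingAD M' → IRat A M' →
        M'.card ≤ (insert (i, d) (M.erase (j, d))).card) ∧
      (∀ d', notWorseAt rank M (insert (i, d) (M.erase (j, d))) d') := by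
  rw [fairM, not_not] at hunfair
  obtain ⟨i, d, hi, hAi, hcase⟩ := hunfair
  rcases hcase with hdun | ⟨j, hjd, hlt⟩
  · -- d unmatched: insert (i,d) gives bigger IR matching, contradiction
    exfalso
    have hiM : (i, d) ∉ M := hi d
    have h1 : isMatchingAD (insert (i, d) M) := by
      constructor
      · intro p hp q hq hpq
        rcases Finset.mem_insert.1 hp with rfl | hp <;>
          rcases Finset.mem_insert.1 hq with rfl | hq
        · rfl
        · exact absurd hq (by rw [show q = (q.1, q.2) from rfl, ← hpq]; exact hi _)
        · exact absurd hp (by rw [show p = (p.1, p.2) from rfl, hpq]; exact hi _)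
        · exact hM.1 p hp q hq hpq
      · intro p hp q hq hpq
        rcases Finset.mem_insert.1 hp with rfl | hp <;>
          rcases Finset.mem_insert.1 hq with rfl | hq
        · rfl
        · exact absurd hq (by rw [show q = (q.1, q.2) from rfl, ← hpq]; exact hdun q.1)
        · exact absurd hp (by rw [show p = (p.1, p.2) from rfl, hpq]; exact hdun p.1)
        · exact hM.2 p hp q hq hpq
    have h2 : IRat A (insert (i, d) M) := by
      intro p hp
      rcases Finset.mem_insert.1 hp with rfl | hp
      · exact hAi
      · exact hIR p hp
    have := hmax _ h1 h2
    rw [Finset.card_insert_of_notMem hiM] at this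
    omega
  · refine ⟨i, d, j, hi, hAi, hjd, hlt, ?_, ?_, ?_, ?_⟩
    · constructor
      · intro p hp q hq hpq
        rcases Finset.mem_insert.1 hp with rfl | hp <;>
          rcases Finset.mem_insert.1 hq with rfl | hq
        · rfl
        · exact absurd (Finset.mem_of_mem_erase hq)
            (by rw [show q = (q.1, q.2) from rfl, ← hpq]; exact hi _)
        · exact absurd (Finset.mem_of_mem_erase hp)
            (by rw [show p = (p.1, p.2) from rfl, hpq]; exact hi _)
        · exact hM.1 p (Finset.mem_of_mem_erase hp) q (Finset.mem_of_mem_erase hq) hpq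
      · intro p hp q hq hpq
        rcases Finset.mem_insert.1 hp with rfl | hp <;>
          rcases Finset.mem_insert.1 hq with rfl | hq
        · rfl
        · exfalso
          have hq' := Finset.mem_of_mem_erase hq
          have : q = (j, d) := hM.2 q hq' (j, d) hjd hpq.symm
          exact (Finset.mem_erase.1 hq).1 this
        · exfalso
          have hp' := Finset.mem_of_mem_erase hp
          have : p = (j, d) := hM.2 p hp' (j, d) hjd hpq
          exact (Finset.mem_erase.1 hp).1 this
        · exact hM.2 p (Finset.mem_of_mem_erase hp) q (Finset.mem_of_mem_erase hq) hpq
    · intro p hp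
      rcases Finset.mem_insert.1 hp with rfl | hp
      · exact hAi
      · exact hIR p (Finset.mem_of_mem_erase hp)
    · intro M' h1 h2
      have hiM : (i, d) ∉ M.erase (j, d) := fun h => hi d (Finset.mem_of_mem_erase h)
      rw [Finset.card_insert_of_notMem hiM, Finset.card_erase_of_mem hjd]
      have hc := hmax M' h1 h2
      have hpos : 0 < M.card := Finset.card_pos.2 ⟨_, hjd⟩
      omega
    · intro d' j' hj'
      by_cases h : (j', d') = (j, d)
      · obtain ⟨rfl, rfl⟩ := Prod.mk.injEq .. ▸ h
        exact ⟨i, Finset.mem_insert_self _ _, le_of_lt hlt⟩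
      · exact ⟨j', Finset.mem_insert_of_mem (Finset.mem_erase.2 ⟨h, hj'⟩), le_refl _⟩
end

section
/- The improvement process terminates: starting from any maximum matching, iteratively replacing, at some institution d, its matched agent j by an unmatched agent i with d ∈ A_i and i ≻_d j, must terminate after finitely many steps, and no agent–institution pair (i, d) is used twice as a replacement during the process. -/
open scoped Classical

variable {I D : Type*} [Fintype I] [Fintype D] [DecidableEq I] [DecidableEq D]

/-- A replacement step: unmatched agent `i` replaces agent `j` at institution `d ∈ A i`,
where `i` has higher priority at `d` than `j`. -/
def stepAt (A : I → Finset D) (rank : D → I → ℕ)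
    (M M' : Finset (I × D)) (i : I) (d : D) : Prop :=
  ∃ j, unmatchedAgent M i ∧ d ∈ A i ∧ (j, d) ∈ M ∧ rank d i < rank d j ∧
    M' = insert (i, d) (M.erase (j, d))

lemma step_sum_lt (A : I → Finset D) (rank : D → I → ℕ)
    {M M' : Finset (I × D)} {i : I} {d : D}
    (h : stepAt A rank M M' i d) :
    M'.sum (fun p => rank p.2 p.1) < M.sum (fun p => rank p.2 p.1) := by
  obtain ⟨j, hun, hA, hjM, hlt, hM'⟩ := h
  have hie : (i, d) ∉ M.erase (j, d) := fun h => hun d (Finset.mem_of_mem_erase h)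
  have key : rank d j + (M.erase (j,d)).sum (fun p => rank p.2 p.1)
      = M.sum (fun p => rank p.2 p.1) := Finset.add_sum_erase M (fun p => rank p.2 p.1) hjM
  rw [hM', Finset.sum_insert hie]
  simp only at key ⊢
  omega

lemma step_matching (A : I → Finset D) (rank : D → I → ℕ)
    {M M' : Finset (I × D)} {i : I} {d : D}
    (hM : isMatchingAD M) (h : stepAt A rank M M' i d) : isMatchingAD M' := by
  obtain ⟨j, hun, hA, hjM, hlt, hM'⟩ := h
  subst hM'
  constructor <;> intro q hq r hr heq <;>
    rcases Finset.mem_insert.1 hq with hq | hq <;>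
    rcases Finset.mem_insert.1 hr with hr | hr
  · rw [hq, hr]
  · exfalso
    have hrM : r ∈ M := Finset.mem_of_mem_erase hr
    have hr1 : r.1 = i := by rw [← heq, hq]
    have : (i, r.2) ∈ M := by rw [← hr1]; exact hrM
    exact hun r.2 this
  · exfalso
    have hqM : q ∈ M := Finset.mem_of_mem_erase hq
    have hq1 : q.1 = i := by rw [heq, hr]
    have : (i, q.2) ∈ M := by rw [← hq1]; exact hqM
    exact hun q.2 this
  · exact hM.1 q (Finset.mem_of_mem_erase hq) r (Finset.mem_of_mem_erase hr) heq
  · rw [hq, hr]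
  · exfalso
    have hrM : r ∈ M := Finset.mem_of_mem_erase hr
    have hr2 : r.2 = d := by rw [← heq, hq]
    have : r = (j, d) := hM.2 r hrM (j, d) hjM (by rw [hr2])
    exact (Finset.ne_of_mem_erase hr) this
  · exfalso
    have hqM : q ∈ M := Finset.mem_of_mem_erase hq
    have hq2 : q.2 = d := by rw [heq, hr]
    have : q = (j, d) := hM.2 q hqM (j, d) hjM (by rw [hq2])
    exact (Finset.ne_of_mem_erase hq) this
  · exact hM.2 q (Finset.mem_of_mem_erase hq) r (Finset.mem_of_mem_erase hr) heq

lemma matching_invariant (A : I → Finset D) (rank : D → I → ℕ)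
    {L : ℕ} {f : ℕ → Finset (I × D)} {p : ℕ → I × D}
    (h0 : isMatchingAD (f 0))
    (hstep : ∀ n < L, stepAt A rank (f n) (f (n + 1)) (p n).1 (p n).2) :
    ∀ k ≤ L, isMatchingAD (f k) := by
  intro k
  induction k with
  | zero => intro _; exact h0
  | succ m ih =>
    intro hm
    exact step_matching A rank (ih (by omega)) (hstep m (by omega))

lemma no_repeat_aux (A : I → Finset D) (rank : D → I → ℕ)
    {L : ℕ} {f : ℕ → Finset (I × D)} {p : ℕ → I × D}
    (h0 : isMatchingAD (f 0))
    (hstep : ∀ n < L, stepAt A rank (f n) (f (n + 1)) (p n).1 (p n).2)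
    {m n : ℕ} (hmn : m < n) (hn : n < L) : p m ≠ p n := by
  intro heq
  have hmatch := matching_invariant A rank h0 hstep
  set i := (p m).1 with hi
  set d := (p m).2 with hd
  -- invariant: from time m+1 to n, some agent a with rank d a ≤ rank d i is matched to d
  have inv : ∀ k, m + 1 ≤ k → k ≤ n → ∃ a, (a, d) ∈ f k ∧ rank d a ≤ rank d i := by
    intro k hk1
    induction k, hk1 using Nat.le_induction with
    | base =>
      intro _
      obtain ⟨j, hun, hA, hjM, hlt, hM'⟩ := hstep m (by omega)
      exact ⟨i, by rw [hM']; exact Finset.mem_insert_self _ _, le_refl _⟩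
    | succ k hk ih =>
      intro hkn
      obtain ⟨a, haM, hale⟩ := ih (by omega)
      obtain ⟨jk, hun, hA, hjM, hlt, hM'⟩ := hstep k (by omega)
      by_cases hcase : (p k).2 = d
      · have hMk := hmatch k (by omega)
        have haj : (a, d) = (jk, (p k).2) := by
          apply hMk.2 _ haM _ hjM
          simp [hcase]
        have ha : a = jk := congrArg Prod.fst haj
        rw [ha] at hale
        refine ⟨(p k).1, ?_, ?_⟩
        · rw [hM', ← hcase]
          exact Finset.mem_insert_self _ _
        · have : rank d (p k).1 < rank d jk := by rwa [hcase] at hlt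
          omega
      · refine ⟨a, ?_, hale⟩
        rw [hM']
        apply Finset.mem_insert_of_mem
        apply Finset.mem_erase_of_ne_of_mem _ haM
        intro hcontra
        exact hcase (congrArg Prod.snd hcontra).symm
  obtain ⟨a, haM, hale⟩ := inv n (by omega) (le_refl _)
  obtain ⟨j', hun', hA', hj'M, hlt', _⟩ := hstep n hn
  have hMn := hmatch n (by omega)
  have hpn1 : (p n).1 = i := by rw [← heq]
  have hpn2 : (p n).2 = d := by rw [← heq]
  rw [hpn2] at hj'M
  rw [hpn1, hpn2] at hlt'
  have : (a, d) = (j', d) := hMn.2 _ haM _ hj'M rfl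
  have ha : a = j' := congrArg Prod.fst this
  rw [ha] at hale
  omega

/-- The improvement process terminates: there is no infinite sequence of replacement steps
from a maximum matching; moreover, no agent-institution pair is used twice as a replacement. -/
theorem improvement_process_terminates (A : I → Finset D) (rank : D → I → ℕ)
    (hrank : ∀ d, Function.Injective (rank d)) :
    (¬ ∃ f : ℕ → Finset (I × D), isMatchingAD (f 0) ∧ IRat A (f 0) ∧
      (∀ M' : Finset (I × D), isMatchingAD M' → IRat A M' → M'.card ≤ (f 0).card) ∧
      ∀ n, ∃ i d, stepAt A rank (f n) (f (n + 1)) i d) ∧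
    (∀ (L : ℕ) (f : ℕ → Finset (I × D)) (p : ℕ → I × D),
      isMatchingAD (f 0) → IRat A (f 0) →
      (∀ M' : Finset (I × D), isMatchingAD M' → IRat A M' → M'.card ≤ (f 0).card) →
      (∀ n < L, stepAt A rank (f n) (f (n + 1)) (p n).1 (p n).2) →
      ∀ m < L, ∀ n < L, p m = p n → m = n) := by
  constructor
  · rintro ⟨f, -, -, -, hstep⟩
    have hdec : ∀ n, (f (n+1)).sum (fun p => rank p.2 p.1) < (f n).sum (fun p => rank p.2 p.1) := by
      intro n; obtain ⟨i, d, h⟩ := hstep n; exact step_sum_lt A rank h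
    have hbound : ∀ n, (f n).sum (fun p => rank p.2 p.1) + n ≤ (f 0).sum (fun p => rank p.2 p.1) := by
      intro n
      induction n with
      | zero => simp
      | succ k ih => have := hdec k; omega
    have := hbound ((f 0).sum (fun p => rank p.2 p.1) + 1)
    omega
  · intro L f p h0 _ _ hstep m hm n hn heq
    rcases lt_trichotomy m n with h | h | h
    · exact absurd heq (no_repeat_aux A rank h0 hstep h hn)
    · exact h
    · exact absurd heq.symm (no_repeat_aux A rank h0 hstep h hm)
end

section
/- In a ranked bipartite graph where an institution i's edges all have rank i given by a permutation of institutions, the set of institutions matched in a rank-maximal matching is the lexicographically optimal set of institutions that can be simultaneously matched. -/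
open scoped Classical

variable {N D : Type*} [Fintype N] [Fintype D] [DecidableEq N] [DecidableEq D]

/-- Number of edges of rank `r` in matching `M`, where an edge's rank is the rank of
its institution under `rk`. -/
noncomputable def sigCount (rk : D → ℕ) (M : Finset (D × N)) (r : ℕ) : ℕ :=
  (M.filter fun p => rk p.1 = r).card

/-- The signature of `M'` is lexicographically strictly better than that of `M`. -/
def sigBetter (rk : D → ℕ) (M' M : Finset (D × N)) : Prop :=
  ∃ r, (∀ s < r, sigCount rk M' s = sigCount rk M s) ∧ sigCount rk M r < sigCount rk M' r

/-- `M` is a rank-maximal matching: no matching has a lexicographically better signature. -/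
def rankMaximal (adj : D → N → Prop) (rk : D → ℕ) (M : Finset (D × N)) : Prop :=
  isMatching adj Finset.univ M ∧
    ∀ M' : Finset (D × N), isMatching adj Finset.univ M' → ¬ sigBetter rk M' M

/-- A set of institutions is matchable: some matching saturates it. -/
def matchable (adj : D → N → Prop) (S : Finset D) : Prop :=
  ∃ M : Finset (D × N), isMatching adj Finset.univ M ∧ ∀ d ∈ S, ∃ a, (d, a) ∈ M

/-- `S` is lexicographically strictly better than `T` with respect to ranking `rk`. -/
def setLexBetter (rk : D → ℕ) (S T : Finset D) : Prop :=
  ∃ d, d ∈ S ∧ d ∉ T ∧ ∀ d', rk d' < rk d → (d' ∈ S ↔ d' ∈ T)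


/-- The set of institutions matched by a rank-maximal matching is the lexicographically
optimal set of institutions that can be simultaneously matched. -/
theorem rank_maximal_matched_set_lex_optimal (adj : D → N → Prop) (rk : D → ℕ)
    (hrk : Function.Injective rk) (M : Finset (D × N)) (hM : rankMaximal adj rk M) :
    matchable adj (M.image Prod.fst) ∧
      ∀ T : Finset D, matchable adj T → ¬ setLexBetter rk T (M.image Prod.fst) := by
  have sig_pos : ∀ (M' : Finset (D × N)) r,
      0 < sigCount rk M' r ↔ ∃ p ∈ M', rk p.1 = r := by
    intro M' r
    simp [sigCount, Finset.card_pos, Finset.Nonempty, Finset.mem_filter]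
  have sig_le : ∀ (M' : Finset (D × N)), isMatching adj Finset.univ M' →
      ∀ r, sigCount rk M' r ≤ 1 := by
    intro M' hM' r
    apply Finset.card_le_one.mpr
    intro p hp q hq
    rw [Finset.mem_filter] at hp hq
    exact hM'.2.1 p hp.1 q hq.1 (hrk (hp.2.trans hq.2.symm))
  constructor
  · exact ⟨M, hM.1, fun d hd => by
      obtain ⟨p, hp, hpd⟩ := Finset.mem_image.mp hd
      exact ⟨p.2, hpd ▸ hp⟩⟩
  · rintro T ⟨M₀, hM₀, hsat⟩ ⟨d, hdT, hdS, hlow⟩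
    -- d has rank rk d; M has no edge of rank rk d, M₀ does.
    have hM0_d : 0 < sigCount rk M₀ (rk d) := by
      obtain ⟨a, ha⟩ := hsat d hdT
      exact (sig_pos M₀ (rk d)).mpr ⟨(d, a), ha, rfl⟩
    have hM_d : sigCount rk M (rk d) = 0 := by
      by_contra h
      obtain ⟨p, hp, hpr⟩ := (sig_pos M (rk d)).mp (Nat.pos_of_ne_zero h)
      exact hdS (Finset.mem_image.mpr ⟨p, hp, hrk hpr⟩)
    have hPd : sigCount rk M₀ (rk d) ≠ sigCount rk M (rk d) := by omega
    have hex : ∃ r, sigCount rk M₀ r ≠ sigCount rk M r := ⟨rk d, hPd⟩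
    obtain ⟨r, hrP, hrmin⟩ :
        ∃ r, sigCount rk M₀ r ≠ sigCount rk M r ∧
          ∀ s < r, sigCount rk M₀ s = sigCount rk M s :=
      ⟨Nat.find hex, Nat.find_spec hex, fun s hs =>
        not_not.mp (Nat.find_min hex hs)⟩
    have hrle : r ≤ rk d := by
      by_contra h
      exact hPd (hrmin (rk d) (by omega))
    have hlt : sigCount rk M r < sigCount rk M₀ r := by
      rcases lt_or_gt_of_ne hrP with h | h
      · exfalso
        -- M has an edge of rank r, M₀ doesn't
        obtain ⟨p, hp, hpr⟩ := (sig_pos M r).mp (lt_of_le_of_lt (Nat.zero_le _) h)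
        have hrne : r ≠ rk d := by
          intro he; exact hdS (Finset.mem_image.mpr ⟨p, hp, hrk (hpr.trans he)⟩)
        have hrlt : rk p.1 < rk d := by omega
        have hpT : p.1 ∈ T := (hlow p.1 hrlt).mpr (Finset.mem_image.mpr ⟨p, hp, rfl⟩)
        obtain ⟨a, ha⟩ := hsat p.1 hpT
        have h1 : 0 < sigCount rk M₀ r := (sig_pos M₀ r).mpr ⟨(p.1, a), ha, hpr⟩
        have h2 : sigCount rk M r ≤ 1 := sig_le M hM.1 r
        omega
      · exact h
    exact hM.2 M₀ hM₀ ⟨r, hrmin, hlt⟩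
end

section
/- Sequential matchings in the acceptability graph are fair: given any permutation π of institutions and strict priorities ≻_d, the matching obtained by iteratively assigning each institution, in order of π, the highest-≻_d-priority still-unmatched agent that finds it acceptable (if any) yields a fair matching. -/
open scoped Classical

variable {I D : Type*} [Fintype I] [Fintype D] [DecidableEq I] [DecidableEq D]

/-- Agent `i` is available for institution `d` at matching `M`: finds `d` acceptable
and is unmatched. -/
def avail (A : I → Finset D) (M : Finset (I × D)) (d : D) (i : I) : Prop :=
  d ∈ A i ∧ ∀ e, (i, e) ∉ M

/-- One step of the sequential matching at institution `d`: either no available agent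
and the matching is unchanged, or `d` is matched to the highest-priority available agent. -/
def seqStepSpec (A : I → Finset D) (rank : D → I → ℕ)
    (M M' : Finset (I × D)) (d : D) : Prop :=
  ((¬ ∃ i, avail A M d i) ∧ M' = M) ∨
  (∃ i, avail A M d i ∧ (∀ j, avail A M d j → rank d i ≤ rank d j) ∧ M' = insert (i, d) M)


lemma seq_mono (A : I → Finset D) (rank : D → I → ℕ)
    (L : List D) (f : ℕ → Finset (I × D))
    (hstep : ∀ n (hn : n < L.length), seqStepSpec A rank (f n) (f (n + 1)) (L.get ⟨n, hn⟩)) :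
    ∀ {n m : ℕ}, n ≤ m → m ≤ L.length → f n ⊆ f m := by
  intro n m hnm hm
  induction m with
  | zero => have : n = 0 := by omega
            subst this; rfl
  | succ m ih =>
    rcases Nat.lt_or_ge n (m+1) with h | h
    · have h1 : f m ⊆ f (m+1) := by
        rcases hstep m (by omega) with ⟨_, he⟩ | ⟨i, _, _, he⟩
        · rw [he]
        · rw [he]; exact Finset.subset_insert _ _
      exact (ih (by omega) (by omega)).trans h1
    · have : n = m + 1 := by omega
      subst this; rfl

lemma seq_mem (A : I → Finset D) (rank : D → I → ℕ)
    (L : List D) (f : ℕ → Finset (I × D)) (hf0 : f 0 = ∅)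
    (hstep : ∀ n (hn : n < L.length), seqStepSpec A rank (f n) (f (n + 1)) (L.get ⟨n, hn⟩)) :
    ∀ m, m ≤ L.length → ∀ p ∈ f m, ∃ n, n < m ∧
      ∀ k, avail A (f n) p.2 k → rank p.2 p.1 ≤ rank p.2 k := by
  intro m
  induction m with
  | zero => intro _ p hp; simp [hf0] at hp
  | succ m ih =>
    intro hm p hp
    rcases hstep m (by omega) with ⟨_, he⟩ | ⟨i, hav, hmin, he⟩
    · rw [he] at hp
      obtain ⟨n, h1, h3⟩ := ih (by omega) p hp
      exact ⟨n, by omega, h3⟩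
    · rw [he] at hp
      rcases Finset.mem_insert.mp hp with rfl | hp
      · exact ⟨m, by omega, hmin⟩
      · obtain ⟨n, h1, h3⟩ := ih (by omega) p hp
        exact ⟨n, by omega, h3⟩

/-- Any sequential matching, processing all institutions in the order of a list `L` and
assigning each the highest-priority still-unmatched agent that accepts it, is fair. -/
theorem sequential_matching_fair (A : I → Finset D) (rank : D → I → ℕ)
    (hrank : ∀ d, Function.Injective (rank d))
    (L : List D) (hL : ∀ d : D, d ∈ L)
    (f : ℕ → Finset (I × D)) (hf0 : f 0 = ∅)
    (hstep : ∀ n (hn : n < L.length), seqStepSpec A rank (f n) (f (n + 1)) (L.get ⟨n, hn⟩)) :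
    fairM A rank (f L.length) := by
  rintro ⟨i, d, hui, hAi, hbad⟩
  obtain ⟨⟨n, hn⟩, hdn⟩ := List.mem_iff_get.mp (hL d)
  have hmono : ∀ {n m : ℕ}, n ≤ m → m ≤ L.length → f n ⊆ f m := seq_mono A rank L f hstep
  have havail : ∀ k, k ≤ L.length → avail A (f k) d i :=
    fun k hk => ⟨hAi, fun e he => hui e (hmono hk le_rfl he)⟩
  have hdmatched : ∃ j, (j, d) ∈ f L.length := by
    rcases hstep n hn with ⟨hno, _⟩ | ⟨j, hj, hjmin, hj'⟩
    · refine absurd ⟨i, ?_⟩ hno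
      rw [hdn]; exact havail n (le_of_lt hn)
    · refine ⟨j, hmono (Nat.succ_le_of_lt hn) le_rfl ?_⟩
      rw [hj', hdn]; exact Finset.mem_insert_self _ _
  rcases hbad with hnone | ⟨j, hjM, hrk⟩
  · obtain ⟨j, hj⟩ := hdmatched; exact hnone j hj
  · obtain ⟨m, hm, hm3⟩ := seq_mem A rank L f hf0 hstep L.length le_rfl (j, d) hjM
    have := hm3 i (havail m (le_of_lt hm))
    simp at this
    omega
end
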